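/- arXiv:1102.4136 — 3 statements merged into one kernel-verified Lean document; each statement's English description precedes it below -/
import Mathlib

section
/- For 0 < λ < 4 and k := (4-λ)/(4+λ), the integral ∫_{λ/2-1}^{1} dx / (√(1-(λ/2-x)²)·√(1-x²)) equals (1+k)·K(k), where K(k) = ∫₀¹ dt/√((1-t²)(1-k²t²)) is the complete elliptic integral of the first kind. -/
open Real intervalIntegral

open MeasureTheory in
lemma even_integral_neg_one_one (h : ℝ → ℝ) (he : ∀ t, h (-t) = h t) :
    (∫ t in (-1:ℝ)..1, h t) = 2 * ∫ t in (0:ℝ)..1, h t := by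
  have hfun : (fun t => h (-t)) = h := funext he
  have hneg : (∫ t in (-1:ℝ)..0, h t) = ∫ t in (0:ℝ)..1, h t := by
    have := intervalIntegral.integral_comp_neg h (a := 0) (b := 1)
    rw [hfun] at this
    simpa using this.symm
  by_cases hi : IntervalIntegrable h volume 0 1
  · have hi2 : IntervalIntegrable h volume (-1) 0 := by
      have : IntervalIntegrable h volume (-1) 0 ↔
          IntervalIntegrable (fun x => h (-x)) volume 1 0 := by
        simpa using IntervalIntegrable.iff_comp_neg (f := h) (a := (-1:ℝ)) (b := 0)
      rw [this, hfun]
      exact hi.symm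
    rw [← intervalIntegral.integral_add_adjacent_intervals hi2 hi, hneg, two_mul]
  · have hi3 : ¬ IntervalIntegrable h volume (-1) 1 := fun H =>
      hi (H.mono_set (by rw [Set.uIcc_of_le (by norm_num : (0:ℝ) ≤ 1),
        Set.uIcc_of_le (by norm_num : (-1:ℝ) ≤ 1)]; intro x hx; exact ⟨by linarith [hx.1], hx.2⟩))
    rw [intervalIntegral.integral_undef hi, intervalIntegral.integral_undef hi3]
    ring

/-- The complete elliptic integral of the first kind. -/
noncomputable def ellipticK (k : ℝ) : ℝ :=
  ∫ t in (0:ℝ)..1, 1 / Real.sqrt ((1 - t^2) * (1 - k^2 * t^2))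

/-- For `0 < λ < 4` and `k = (4-λ)/(4+λ)`, the integral
`∫_{λ/2-1}^{1} dx / (√(1-(λ/2-x)²)·√(1-x²))` equals `(1+k)·K(k)`. -/
theorem integral_eq_one_add_k_mul_ellipticK (lam : ℝ) (h0 : 0 < lam) (h4 : lam < 4) :
    (∫ x in (lam/2 - 1)..1,
        1 / (Real.sqrt (1 - (lam/2 - x)^2) * Real.sqrt (1 - x^2))) =
      (1 + (4 - lam)/(4 + lam)) * ellipticK ((4 - lam)/(4 + lam)) := by
  set k : ℝ := (4 - lam)/(4 + lam) with hk
  set L : ℝ := 1 - lam/4 with hL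
  have hLpos : 0 < L := by rw [hL]; linarith
  have hcpos : 0 < 1 + lam/4 := by linarith
  -- Step 1: combine the square roots
  have step1 : (∫ x in (lam/2 - 1)..1,
        1 / (Real.sqrt (1 - (lam/2 - x)^2) * Real.sqrt (1 - x^2))) =
      ∫ x in (lam/2 - 1)..1, 1 / Real.sqrt ((1 - (lam/2 - x)^2) * (1 - x^2)) := by
    apply intervalIntegral.integral_congr
    intro x hx
    rw [Set.uIcc_of_le (by linarith)] at hx
    obtain ⟨hx1, hx2⟩ := hx
    have hnn : 0 ≤ 1 - (lam/2 - x)^2 := by nlinarith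
    dsimp only
    rw [Real.sqrt_mul hnn]
  -- Step 2: shift x = u + lam/4
  have step2 : (∫ x in (lam/2 - 1)..1, 1 / Real.sqrt ((1 - (lam/2 - x)^2) * (1 - x^2))) =
      ∫ u in (-L)..L, 1 / Real.sqrt ((L^2 - u^2) * ((1 + lam/4)^2 - u^2)) := by
    have := intervalIntegral.integral_comp_add_right
      (fun x => 1 / Real.sqrt ((1 - (lam/2 - x)^2) * (1 - x^2))) (lam/4)
      (a := -L) (b := L)
    rw [show -L + lam/4 = lam/2 - 1 by rw [hL]; ring,
        show L + lam/4 = 1 by rw [hL]; ring] at this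
    rw [← this]
    apply intervalIntegral.integral_congr
    intro u _
    have : (1 - (lam/2 - (u + lam/4))^2) * (1 - (u + lam/4)^2) =
        (L^2 - u^2) * ((1 + lam/4)^2 - u^2) := by rw [hL]; ring
    dsimp only
    rw [this]
  -- Step 3: rescale u = t * L
  have step3 : (∫ u in (-L)..L, 1 / Real.sqrt ((L^2 - u^2) * ((1 + lam/4)^2 - u^2))) =
      L * ∫ t in (-1:ℝ)..1, 1 / Real.sqrt ((L^2 - (t*L)^2) * ((1 + lam/4)^2 - (t*L)^2)) := by
    have := intervalIntegral.smul_integral_comp_mul_right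
      (fun u => 1 / Real.sqrt ((L^2 - u^2) * ((1 + lam/4)^2 - u^2))) L
      (a := -1) (b := 1)
    rw [show (-1:ℝ) * L = -L by ring, one_mul] at this
    rw [← this, smul_eq_mul]
  -- Step 4: pull out the constant
  have hLk : L = (1 + lam/4) * k := by
    rw [hL, hk]; field_simp
  have step4 : ∀ t : ℝ, 1 / Real.sqrt ((L^2 - (t*L)^2) * ((1 + lam/4)^2 - (t*L)^2)) =
      (L * (1 + lam/4))⁻¹ * (1 / Real.sqrt ((1 - t^2) * (1 - k^2 * t^2))) := by
    intro t
    have harg : (L^2 - (t*L)^2) * ((1 + lam/4)^2 - (t*L)^2) =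
        (L * (1 + lam/4))^2 * ((1 - t^2) * (1 - k^2 * t^2)) := by
      rw [hLk]; ring
    rw [harg, Real.sqrt_mul (sq_nonneg _), Real.sqrt_sq (by positivity : 0 ≤ L * (1 + lam/4))]
    rw [one_div, one_div, mul_inv]
  rw [step1, step2, step3]
  simp_rw [step4]
  rw [intervalIntegral.integral_const_mul,
    even_integral_neg_one_one (fun t => 1 / Real.sqrt ((1 - t^2) * (1 - k^2 * t^2)))
      (by intro t; simp [neg_pow])]
  rw [← ellipticK]
  have : L * ((L * (1 + lam/4))⁻¹ * (2 * ellipticK k)) = (2 / (1 + lam/4)) * ellipticK k := by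
    field_simp
  rw [this]
  congr 1
  rw [hk]
  field_simp
  ring
end

section
/- For every k ∈ (0,1), the Landen-type identity (1+k)·K(k) = K(2√k/(1+k)) holds, where K is the complete elliptic integral of the first kind. -/
/-!
Landen's substitution `t = (1 + k) s / (1 + k s²)` maps `(0, 1)` bijectively onto itself, and
`(1 - t²)(1 - k₁² t²) = (1 - s²)(1 - k² s²) · ((1 - k s²) / (1 + k s²)²)²` for
`k₁ = 2√k / (1 + k)`, while `dt/ds = (1 + k)(1 - k s²) / (1 + k s²)²`. Hence it carries the
integrand of `K(k₁)` to `1 + k` times that of `K(k)`. The change of variables formula for an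
injective map on a measurable set holds without any integrability hypothesis, so the
singularity of both integrands at `1` needs no separate limiting argument.
-/

open MeasureTheory Set

noncomputable def ellipticKIntegrand (m t : ℝ) : ℝ :=
  1 / √((1 - t ^ 2) * (1 - m ^ 2 * t ^ 2))

lemma ellipticK_eq_setIntegral_Ioo (m : ℝ) :
    ellipticK m = ∫ t in Ioo 0 1, ellipticKIntegrand m t := by
  rw [ellipticK, intervalIntegral.integral_of_le zero_le_one, integral_Ioc_eq_integral_Ioo]
  rfl

noncomputable def landenModulus (k : ℝ) : ℝ :=
  2 * √k / (1 + k)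

noncomputable def landenMap (k s : ℝ) : ℝ :=
  (1 + k) * s / (1 + k * s ^ 2)

noncomputable def landenMapDeriv (k s : ℝ) : ℝ :=
  (1 + k) * (1 - k * s ^ 2) / (1 + k * s ^ 2) ^ 2

section LandenMap

variable {k : ℝ}

lemma hasDerivAt_landenMap {s : ℝ} (hs : 1 + k * s ^ 2 ≠ 0) :
    HasDerivAt (landenMap k) (landenMapDeriv k s) s := by
  have hnum : HasDerivAt (fun s => (1 + k) * s) (1 + k) s := by
    simpa using (hasDerivAt_id s).const_mul (1 + k)
  have hden : HasDerivAt (fun s => 1 + k * s ^ 2) (k * (2 * s)) s := by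
    simpa using ((hasDerivAt_pow 2 s).const_mul k).const_add 1
  refine (hnum.div hden hs).congr_deriv ?_
  rw [landenMapDeriv]
  field_simp
  ring

lemma one_add_mul_sq_pos {s : ℝ} (hk : |k| < 1) (hs : s ∈ Icc (0 : ℝ) 1) :
    0 < 1 + k * s ^ 2 := by
  obtain ⟨hk₀, hk₁⟩ := abs_lt.mp hk
  obtain ⟨hs₀, hs₁⟩ := hs
  nlinarith [mul_nonneg hs₀ hs₀, mul_le_one₀ hs₁ hs₀ hs₁]

lemma continuousOn_landenMap (hk : |k| < 1) : ContinuousOn (landenMap k) (Icc 0 1) :=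
  continuousOn_id.const_smul (1 + k) |>.div (by fun_prop)
    fun s hs => (one_add_mul_sq_pos hk hs).ne'

lemma mapsTo_landenMap (hk : |k| < 1) : MapsTo (landenMap k) (Ioo 0 1) (Ioo 0 1) := by
  intro s hs
  have hden := one_add_mul_sq_pos hk (Ioo_subset_Icc_self hs)
  obtain ⟨hk₀, hk₁⟩ := abs_lt.mp hk
  obtain ⟨hs₀, hs₁⟩ := hs
  refine ⟨div_pos (by nlinarith) hden, ?_⟩
  rw [landenMap, div_lt_one hden]
  -- `1 + k s² - (1 + k) s = (1 - s)(1 - k s)`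
  nlinarith [mul_pos (sub_pos.mpr hs₁) (by nlinarith : 0 < 1 - k * s)]

lemma injOn_landenMap (hk : |k| < 1) : InjOn (landenMap k) (Ioo 0 1) := by
  intro s hs t ht hst
  have hds := one_add_mul_sq_pos hk (Ioo_subset_Icc_self hs)
  have hdt := one_add_mul_sq_pos hk (Ioo_subset_Icc_self ht)
  obtain ⟨hk₀, hk₁⟩ := abs_lt.mp hk
  have hst_lt : s * t < 1 := mul_lt_one_of_nonneg_of_lt_one_left hs.1.le hs.2 ht.2.le
  have hkst : 0 < 1 - k * s * t := by
    nlinarith [mul_pos (mul_pos hs.1 ht.1) (sub_pos.mpr hk₁)]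
  rw [landenMap, landenMap, div_eq_div_iff hds.ne' hdt.ne'] at hst
  have hfactor : (s - t) * ((1 + k) * (1 - k * s * t)) = 0 := by linear_combination hst
  rcases mul_eq_zero.mp hfactor with h | h
  · linarith
  · exact absurd h (mul_pos (by linarith) hkst).ne'

lemma image_landenMap_Ioo (hk : |k| < 1) : landenMap k '' Ioo 0 1 = Ioo 0 1 := by
  refine (mapsTo_landenMap hk).image_subset.antisymm ?_
  have hk₀ : 1 + k ≠ 0 := by linarith [neg_abs_le k]
  have h0 : landenMap k 0 = 0 := by simp [landenMap]
  have h1 : landenMap k 1 = 1 := by simp [landenMap, div_self hk₀]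
  simpa [h0, h1] using intermediate_value_Ioo zero_le_one (continuousOn_landenMap hk)

end LandenMap

section Landen

variable {k : ℝ}

lemma landenModulus_sq (hk : 0 ≤ k) : landenModulus k ^ 2 = 4 * k / (1 + k) ^ 2 := by
  rw [landenModulus, div_pow, mul_pow, Real.sq_sqrt hk]
  norm_num

lemma landen_quartic_landenMap (hk : 0 ≤ k) (s : ℝ) :
    (1 - landenMap k s ^ 2) * (1 - landenModulus k ^ 2 * landenMap k s ^ 2) =
      (1 - s ^ 2) * (1 - k ^ 2 * s ^ 2) * ((1 - k * s ^ 2) / (1 + k * s ^ 2) ^ 2) ^ 2 := by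
  have hk₁ : 0 < 1 + k := by linarith
  have hs : 0 < 1 + k * s ^ 2 := by positivity
  rw [landenModulus_sq hk, landenMap]
  field_simp
  ring

lemma abs_landenMapDeriv_mul_ellipticKIntegrand (hk₀ : 0 ≤ k) (hk₁ : k < 1) {s : ℝ}
    (hs : s ∈ Ioo (0 : ℝ) 1) :
    |landenMapDeriv k s| * ellipticKIntegrand (landenModulus k) (landenMap k s) =
      (1 + k) * ellipticKIntegrand k s := by
  obtain ⟨hs₀, hs₁⟩ := hs
  have hnum : 0 < 1 - k * s ^ 2 := by
    nlinarith [mul_lt_one_of_nonneg_of_lt_one_left hs₀.le hs₁ hs₁.le]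
  have hfactor : 0 < (1 - k * s ^ 2) / (1 + k * s ^ 2) ^ 2 := by positivity
  have hquartic : 0 < (1 - s ^ 2) * (1 - k ^ 2 * s ^ 2) := by
    have hs2 : s ^ 2 < 1 := by nlinarith
    have hks : k ^ 2 * s ^ 2 < 1 := by
      nlinarith [mul_lt_one_of_nonneg_of_lt_one_left hk₀ hk₁ hk₁.le]
    exact mul_pos (by linarith) (by linarith)
  have hderiv : landenMapDeriv k s = (1 + k) * ((1 - k * s ^ 2) / (1 + k * s ^ 2) ^ 2) := by
    rw [landenMapDeriv, mul_div_assoc]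
  rw [ellipticKIntegrand, ellipticKIntegrand, landen_quartic_landenMap hk₀,
    Real.sqrt_mul hquartic.le, Real.sqrt_sq hfactor.le, hderiv,
    abs_of_pos (mul_pos (by linarith) hfactor)]
  field_simp

end Landen

/-- Landen-type identity: for `k ∈ (0,1)`, `(1+k)·K(k) = K(2√k/(1+k))`. -/
theorem landen_identity (k : ℝ) (hk0 : 0 < k) (hk1 : k < 1) :
    (1 + k) * ellipticK k = ellipticK (2 * Real.sqrt k / (1 + k)) := by
  have hk : |k| < 1 := abs_lt.mpr ⟨by linarith, hk1⟩
  have hderiv (s : ℝ) (hs : s ∈ Ioo (0 : ℝ) 1) :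
      HasDerivWithinAt (landenMap k) (landenMapDeriv k s) (Ioo 0 1) s :=
    (hasDerivAt_landenMap (one_add_mul_sq_pos hk (Ioo_subset_Icc_self hs)).ne').hasDerivWithinAt
  calc (1 + k) * ellipticK k
      = ∫ s in Ioo 0 1, (1 + k) * ellipticKIntegrand k s := by
        rw [ellipticK_eq_setIntegral_Ioo, integral_const_mul]
    _ = ∫ s in Ioo 0 1,
          |landenMapDeriv k s| • ellipticKIntegrand (landenModulus k) (landenMap k s) :=
        setIntegral_congr_fun measurableSet_Ioo fun s hs =>
          (abs_landenMapDeriv_mul_ellipticKIntegrand hk0.le hk1 hs).symm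
    _ = ∫ t in landenMap k '' Ioo 0 1, ellipticKIntegrand (landenModulus k) t :=
        (integral_image_eq_integral_abs_deriv_smul measurableSet_Ioo hderiv
          (injOn_landenMap hk) _).symm
    _ = ellipticK (landenModulus k) := by
        rw [image_landenMap_Ioo hk, ellipticK_eq_setIntegral_Ioo]
end

section
/- ∫₀¹ K(k)/(1+k) dk = π²/8, where K is the complete elliptic integral of the first kind. -/
/-!
Expand `K(k)/(1+k)` as an integral over `t` and swap the order of integration. With
`c = √(1-t²)`, the inner integral `∫₀¹ dk/((1+k)√((1-t²)(1-k²t²)))` is elementary and equals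
`log(1+c)/c²`. Writing `log(1+c)/c = ∫₀¹ da/(1+ac)` and swapping once more, the new inner integral
is `∫₀¹ dt/(c(1+ac)) = arccos a/√(1-a²)`, and `∫₀¹ arccos a/√(1-a²) da = [-(arccos a)²/2]₀¹ = π²/8`.
All integrands are nonnegative, and the common middle integrand `log(1+c)/c² ≤ 1/c` is integrable,
so both swaps are justified by Tonelli.
-/

open Real MeasureTheory Set intervalIntegral

theorem setIntegral_setIntegral_swap_of_nonneg {α β : Type*} [MeasurableSpace α]
    [MeasurableSpace β] {μ : Measure α} {ν : Measure β} [SFinite μ] [SFinite ν]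
    {f : α → β → ℝ} {s : Set α} {t : Set β} (hs : MeasurableSet s) (ht : MeasurableSet t)
    (hf : Measurable (Function.uncurry f)) (hf_nonneg : ∀ x ∈ s, ∀ y ∈ t, 0 ≤ f x y)
    (hf_int : ∀ x ∈ s, IntegrableOn (f x) t ν)
    (hF_int : IntegrableOn (fun x ↦ ∫ y in t, f x y ∂ν) s μ) :
    ∫ x in s, ∫ y in t, f x y ∂ν ∂μ = ∫ y in t, ∫ x in s, f x y ∂μ ∂ν := by
  refine integral_integral_swap ((integrable_prod_iff hf.aestronglyMeasurable).2
    ⟨ae_restrict_of_forall_mem hs hf_int, hF_int.congr_fun (fun x hx ↦ ?_) hs⟩)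
  exact setIntegral_congr_fun ht fun y hy ↦ (norm_of_nonneg (hf_nonneg x hx y hy)).symm

theorem integral_eq_sub_of_hasDerivAt_of_nonneg {g g' : ℝ → ℝ} {a b : ℝ} (hab : a ≤ b)
    (hcont : ContinuousOn g (Icc a b)) (hderiv : ∀ x ∈ Ioo a b, HasDerivAt g (g' x) x)
    (hg' : ∀ x ∈ Ioo a b, 0 ≤ g' x) : ∫ x in a..b, g' x = g b - g a :=
  integral_eq_sub_of_hasDerivAt_of_le hab hcont hderiv <|
    (intervalIntegrable_iff_integrableOn_Ioc_of_le hab).2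
      (integrableOn_deriv_of_nonneg hcont hderiv hg')

theorem intervalIntegral_eq_setIntegral_Ioo {E : Type*} [NormedAddCommGroup E] [NormedSpace ℝ E]
    {a b : ℝ} (hab : a ≤ b) (f : ℝ → E) : ∫ x in a..b, f x = ∫ x in Ioo a b, f x := by
  rw [integral_of_le hab, integral_Ioc_eq_integral_Ioo]

theorem integrableOn_one_div_sqrt_one_sub_sq :
    IntegrableOn (fun t : ℝ ↦ 1 / √(1 - t ^ 2)) (Ioc (-1) 1) :=
  integrableOn_deriv_of_nonneg continuous_arcsin.continuousOn
    (fun _ ht ↦ hasDerivAt_arcsin ht.1.ne' ht.2.ne) fun _ _ ↦ by positivity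

theorem integrableOn_log_one_add_sqrt_one_sub_sq_div :
    IntegrableOn (fun t : ℝ ↦ log (1 + √(1 - t ^ 2)) / (1 - t ^ 2)) (Ioo 0 1) := by
  refine (integrableOn_one_div_sqrt_one_sub_sq.mono_set
    (Ioo_subset_Ioc_self.trans (Ioc_subset_Ioc_left (by norm_num)))).mono'
    (by fun_prop : Measurable _).aestronglyMeasurable
    (ae_restrict_of_forall_mem measurableSet_Ioo fun t ht ↦ ?_)
  have ht2 : 0 < 1 - t ^ 2 := by nlinarith [ht.1, ht.2]
  have hc : 0 < √(1 - t ^ 2) := sqrt_pos.2 ht2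
  have hlog : 0 ≤ log (1 + √(1 - t ^ 2)) := log_nonneg (by linarith)
  rw [norm_of_nonneg (by positivity), div_le_div_iff₀ ht2 hc]
  nlinarith [log_le_sub_one_of_pos (by linarith : 0 < 1 + √(1 - t ^ 2)), sq_sqrt ht2.le]

theorem hasDerivAt_log_sub_log_one_add_sq_mul_add_sqrt {t k : ℝ} (ht : t ^ 2 < 1)
    (hk : -1 < k) (hk1 : k ≤ 1) :
    HasDerivAt (fun k ↦ (log (1 + k) - log (1 + t ^ 2 * k + √(1 - t ^ 2) * √(1 - k ^ 2 * t ^ 2)))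
      / (1 - t ^ 2)) (1 / √((1 - t ^ 2) * (1 - k ^ 2 * t ^ 2)) / (1 + k)) k := by
  have hc2 : 0 < 1 - t ^ 2 := by linarith
  have hs2 : 0 < 1 - k ^ 2 * t ^ 2 := by
    nlinarith [mul_le_mul_of_nonneg_right (show k ^ 2 ≤ 1 by nlinarith) (sq_nonneg t)]
  set c := √(1 - t ^ 2) with hc_def
  set s := √(1 - k ^ 2 * t ^ 2) with hs_def
  have hc : 0 < c := sqrt_pos.2 hc2
  have hs : 0 < s := sqrt_pos.2 hs2
  have hk0 : 0 < 1 + k := by linarith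
  have hD : 0 < 1 + t ^ 2 * k + c * s := by nlinarith [mul_pos hc hs]
  have hs' : HasDerivAt (fun k ↦ √(1 - k ^ 2 * t ^ 2)) (-(k * t ^ 2) / s) k := by
    refine (((hasDerivAt_pow 2 k).mul_const (t ^ 2)).const_sub 1 |>.sqrt hs2.ne').congr_deriv ?_
    rw [← hs_def]
    field_simp
    ring
  refine ((((hasDerivAt_id k).const_add 1).log hk0.ne').sub
    ((((hasDerivAt_id k).const_mul (t ^ 2)).const_add 1).add (hs'.const_mul c) |>.log hD.ne')
    |>.div_const (1 - t ^ 2)).congr_deriv ?_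
  rw [sqrt_mul hc2.le, ← hc_def, ← hs_def]
  simp only [Pi.add_apply, id, ← hs_def]
  have hD' : 1 + k * t ^ 2 + c * s ≠ 0 := by linarith
  field_simp
  linear_combination (s ^ 2 + k * t ^ 2 + k ^ 2 * t ^ 2) * sq_sqrt hc2.le
    + (1 - t ^ 2) * sq_sqrt hs2.le

theorem integrableOn_one_div_sqrt_div_one_add {t : ℝ} (ht : t ^ 2 < 1) :
    IntegrableOn (fun k ↦ 1 / √((1 - t ^ 2) * (1 - k ^ 2 * t ^ 2)) / (1 + k)) (Ioc 0 1) :=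
  integrableOn_deriv_of_nonneg
    (HasDerivAt.continuousOn fun k hk ↦
      hasDerivAt_log_sub_log_one_add_sq_mul_add_sqrt ht (by linarith [hk.1]) hk.2)
    (fun k hk ↦ hasDerivAt_log_sub_log_one_add_sq_mul_add_sqrt ht (by linarith [hk.1]) hk.2.le)
    fun k hk ↦ by have := hk.1; positivity

theorem integral_one_div_sqrt_div_one_add {t : ℝ} (ht : t ^ 2 < 1) :
    ∫ k in (0:ℝ)..1, 1 / √((1 - t ^ 2) * (1 - k ^ 2 * t ^ 2)) / (1 + k)
      = log (1 + √(1 - t ^ 2)) / (1 - t ^ 2) := by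
  rw [integral_eq_sub_of_hasDerivAt_of_nonneg zero_le_one
    (HasDerivAt.continuousOn fun k hk ↦
      hasDerivAt_log_sub_log_one_add_sq_mul_add_sqrt ht (by linarith [hk.1]) hk.2)
    (fun k hk ↦ hasDerivAt_log_sub_log_one_add_sq_mul_add_sqrt ht (by linarith [hk.1]) hk.2.le)
    fun k hk ↦ by have := hk.1; positivity]
  have h2 : 1 + t ^ 2 * 1 + √(1 - t ^ 2) * √(1 - 1 ^ 2 * t ^ 2) = 2 := by
    rw [one_pow, one_mul, mul_self_sqrt (by linarith)]
    ring
  rw [h2]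
  norm_num [neg_div]

theorem hasDerivAt_log_one_add_mul_div_sq {a c : ℝ} (hc : c ≠ 0) (ha : 0 < 1 + a * c) :
    HasDerivAt (fun a ↦ log (1 + a * c) / c ^ 2) (1 / (c * (1 + a * c))) a := by
  refine ((((hasDerivAt_id a).mul_const c).const_add 1).log ha.ne'
    |>.div_const (c ^ 2)).congr_deriv ?_
  field_simp
  simp

theorem integrableOn_one_div_mul_one_add_mul {c : ℝ} (hc : 0 < c) :
    IntegrableOn (fun a ↦ 1 / (c * (1 + a * c))) (Ioc 0 1) :=
  integrableOn_deriv_of_nonneg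
    (HasDerivAt.continuousOn fun a ha ↦
      hasDerivAt_log_one_add_mul_div_sq hc.ne' (by nlinarith [ha.1]))
    (fun a ha ↦ hasDerivAt_log_one_add_mul_div_sq hc.ne' (by nlinarith [ha.1]))
    fun a ha ↦ by have := ha.1; positivity

theorem integral_one_div_mul_one_add_mul {c : ℝ} (hc : 0 < c) :
    ∫ a in (0:ℝ)..1, 1 / (c * (1 + a * c)) = log (1 + c) / c ^ 2 := by
  rw [integral_eq_sub_of_hasDerivAt_of_nonneg zero_le_one
    (HasDerivAt.continuousOn fun a ha ↦
      hasDerivAt_log_one_add_mul_div_sq hc.ne' (by nlinarith [ha.1]))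
    (fun a ha ↦ hasDerivAt_log_one_add_mul_div_sq hc.ne' (by nlinarith [ha.1]))
    fun a ha ↦ by have := ha.1; positivity]
  simp

/-- With `t = sin θ`, this primitive is `∫₀^θ dφ / (1 + a cos φ)`. -/
theorem hasDerivAt_arccos_div_sqrt {a t : ℝ} (ha : -1 < a) (ha1 : a < 1) (ht : 0 < t)
    (ht1 : t < 1) :
    HasDerivAt (fun t ↦ arccos ((a + √(1 - t ^ 2)) / (1 + a * √(1 - t ^ 2))) / √(1 - a ^ 2))
      (1 / (√(1 - t ^ 2) * (1 + a * √(1 - t ^ 2)))) t := by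
  have hc2 : 0 < 1 - t ^ 2 := by nlinarith
  have hq2 : 0 < 1 - a ^ 2 := by nlinarith
  set c := √(1 - t ^ 2) with hc_def
  set q := √(1 - a ^ 2) with hq_def
  have hc : 0 < c := sqrt_pos.2 hc2
  have hc1 : c < 1 := by rw [hc_def, sqrt_lt' one_pos]; nlinarith
  have hq : 0 < q := sqrt_pos.2 hq2
  have hD : 0 < 1 + a * c := by nlinarith
  have hu : (a + c) / (1 + a * c) ≠ 1 := by
    rw [Ne, div_eq_one_iff_eq hD.ne']; intro h; nlinarith
  have hu' : (a + c) / (1 + a * c) ≠ -1 := by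
    rw [Ne, div_eq_iff hD.ne']; intro h; nlinarith
  have hsqrt : √(1 - ((a + c) / (1 + a * c)) ^ 2) = q * t / (1 + a * c) := by
    have : 1 - ((a + c) / (1 + a * c)) ^ 2 = (q * t / (1 + a * c)) ^ 2 := by
      field_simp
      linear_combination (-(1 - a ^ 2)) * sq_sqrt hc2.le - t ^ 2 * sq_sqrt hq2.le
    rw [this, sqrt_sq (by positivity)]
  have hc' : HasDerivAt (fun t ↦ √(1 - t ^ 2)) (-t / c) t := by
    refine (((hasDerivAt_pow 2 t).const_sub 1).sqrt hc2.ne').congr_deriv ?_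
    field_simp
    ring
  refine ((hasDerivAt_arccos hu' hu).comp t ((hc'.const_add a).div (hc'.const_mul a |>.const_add 1)
    hD.ne') |>.div_const q).congr_deriv ?_
  rw [hsqrt, ← hc_def]
  field_simp
  linear_combination -sq_sqrt hq2.le

theorem integral_one_div_sqrt_mul_one_add_mul_sqrt {a : ℝ} (ha : -1 < a) (ha1 : a < 1) :
    ∫ t in (0:ℝ)..1, 1 / (√(1 - t ^ 2) * (1 + a * √(1 - t ^ 2))) = arccos a / √(1 - a ^ 2) := by
  have hD : ∀ t, 0 < 1 + a * √(1 - t ^ 2) := fun t ↦ by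
    nlinarith [sqrt_nonneg (1 - t ^ 2), sqrt_le_one.2 (by nlinarith : 1 - t ^ 2 ≤ 1)]
  rw [integral_eq_sub_of_hasDerivAt_of_nonneg zero_le_one ?_
    (fun t ht ↦ hasDerivAt_arccos_div_sqrt ha ha1 ht.1 ht.2) fun t _ ↦ by have := hD t; positivity]
  · simp [add_comm a 1, div_self (by linarith : 1 + a ≠ 0)]
  · exact ((continuous_arccos.comp ((by fun_prop : Continuous _).div (by fun_prop)
      fun t ↦ (hD t).ne')).div_const _).continuousOn

theorem integral_arccos_div_sqrt_one_sub_sq :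
    ∫ a in (0:ℝ)..1, arccos a / √(1 - a ^ 2) = π ^ 2 / 8 := by
  rw [integral_eq_sub_of_hasDerivAt_of_nonneg (g := fun a ↦ -arccos a ^ 2 / 2) zero_le_one
    (by fun_prop) (fun a ha ↦ ?_) fun a ha ↦ by have := arccos_nonneg a; positivity]
  · rw [arccos_one, arccos_zero]
    ring
  · refine ((hasDerivAt_arccos (by linarith [ha.1]) ha.2.ne).pow 2
      |>.neg.div_const 2).congr_deriv ?_
    ring

theorem integral_ellipticK_div_one_add_eq_integral_log :
    ∫ k in (0:ℝ)..1, ellipticK k / (1 + k)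
      = ∫ t in (0:ℝ)..1, log (1 + √(1 - t ^ 2)) / (1 - t ^ 2) := by
  have hsq : ∀ t ∈ Ioo (0:ℝ) 1, t ^ 2 < 1 := fun t ht ↦ by nlinarith [ht.1, ht.2]
  have hinner : ∀ t ∈ Ioo (0:ℝ) 1,
      ∫ k in Ioo 0 1, 1 / √((1 - t ^ 2) * (1 - k ^ 2 * t ^ 2)) / (1 + k)
        = log (1 + √(1 - t ^ 2)) / (1 - t ^ 2) := fun t ht ↦ by
    rw [← intervalIntegral_eq_setIntegral_Ioo zero_le_one,
      integral_one_div_sqrt_div_one_add (hsq t ht)]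
  simp only [ellipticK, intervalIntegral_eq_setIntegral_Ioo zero_le_one,
    ← MeasureTheory.integral_div]
  rw [← setIntegral_congr_fun measurableSet_Ioo hinner]
  exact (setIntegral_setIntegral_swap_of_nonneg measurableSet_Ioo measurableSet_Ioo (by fun_prop)
    (fun t _ k hk ↦ by have := hk.1; positivity)
    (fun t ht ↦ (integrableOn_one_div_sqrt_div_one_add (hsq t ht)).mono_set Ioo_subset_Ioc_self)
    (integrableOn_log_one_add_sqrt_one_sub_sq_div.congr_fun (fun t ht ↦ (hinner t ht).symm)
      measurableSet_Ioo)).symm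

theorem integral_log_one_add_sqrt_div_eq_integral_arccos :
    ∫ t in (0:ℝ)..1, log (1 + √(1 - t ^ 2)) / (1 - t ^ 2)
      = ∫ a in (0:ℝ)..1, arccos a / √(1 - a ^ 2) := by
  have hc : ∀ t ∈ Ioo (0:ℝ) 1, 0 < √(1 - t ^ 2) := fun t ht ↦ sqrt_pos.2 (by nlinarith [ht.1, ht.2])
  have hinner : ∀ t ∈ Ioo (0:ℝ) 1,
      ∫ a in Ioo 0 1, 1 / (√(1 - t ^ 2) * (1 + a * √(1 - t ^ 2)))
        = log (1 + √(1 - t ^ 2)) / (1 - t ^ 2) := fun t ht ↦ by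
    rw [← intervalIntegral_eq_setIntegral_Ioo zero_le_one,
      integral_one_div_mul_one_add_mul (hc t ht), sq_sqrt (by nlinarith [ht.1, ht.2])]
  simp only [intervalIntegral_eq_setIntegral_Ioo zero_le_one]
  rw [← setIntegral_congr_fun measurableSet_Ioo hinner]
  refine (setIntegral_setIntegral_swap_of_nonneg measurableSet_Ioo measurableSet_Ioo (by fun_prop)
    (fun t _ a ha ↦ by have := ha.1; positivity)
    (fun t ht ↦ (integrableOn_one_div_mul_one_add_mul (hc t ht)).mono_set Ioo_subset_Ioc_self)
    (integrableOn_log_one_add_sqrt_one_sub_sq_div.congr_fun (fun t ht ↦ (hinner t ht).symm)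
      measurableSet_Ioo)).trans (setIntegral_congr_fun measurableSet_Ioo fun a ha ↦ ?_)
  rw [← intervalIntegral_eq_setIntegral_Ioo zero_le_one,
    integral_one_div_sqrt_mul_one_add_mul_sqrt (by linarith [ha.1]) ha.2]

/-- `∫₀¹ K(k)/(1+k) dk = π²/8`. -/
theorem integral_ellipticK_div_one_add :
    (∫ k in (0:ℝ)..1, ellipticK k / (1 + k)) = π^2 / 8 := by
  rw [integral_ellipticK_div_one_add_eq_integral_log,
    integral_log_one_add_sqrt_div_eq_integral_arccos, integral_arccos_div_sqrt_one_sub_sq]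
end
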